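/- Consider the greedy algorithm on the partition matroid N_m on R = {r^1,...,r^{2m−1}} whose parts are {r^1,...,r^m} and the m−1 singletons {r^{m+1}},...,{r^{2m−1}}, with uniformly random arrival order. Then the algorithm is (1 + 1/m) intersection-competitive, i.e., |OPT| ≤ (1+1/m)·E[|ALG ∩ OPT|], and it is at least m ordinal-competitive, since |OPT ∩ R^1| / E[|ALG ∩ R^1|] = m. -/

import Mathlib

open Finset

/-- Parts of the matroid `N_m` on `2m−1` elements: one part `{r^1,…,r^m}` and
`m−1` singleton parts. -/
def npart (m : ℕ) {n : ℕ} (i : Fin n) : ℕ := if (i : ℕ) < m then 0 else (i : ℕ)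

/-- Independence: at most one element per part. -/
def nIndep (m : ℕ) {n : ℕ} (S : Finset (Fin n)) : Prop :=
  ∀ i ∈ S, ∀ j ∈ S, npart m i = npart m j → i = j

instance (m n : ℕ) (S : Finset (Fin n)) : Decidable (nIndep m S) :=
  inferInstanceAs (Decidable (∀ i ∈ S, ∀ j ∈ S, npart m i = npart m j → i = j))

/-- The greedy online algorithm on arrival order `σ`. -/
def greedyALG (m : ℕ) {n : ℕ} (σ : Equiv.Perm (Fin n)) : Finset (Fin n) :=
  (List.ofFn fun t => σ t).foldl
    (fun S r => if nIndep m (insert r S) then insert r S else S) ∅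

/-- The top `k` elements `R^k` (smaller index = higher value). -/
def topk (n k : ℕ) : Finset (Fin n) := Finset.univ.filter fun i => (i : ℕ) < k

/-!
Element `r^(i+1)` is `i : Fin n`, so the block `{r^1, …, r^m}` is `topk n m`. Greedy keeps
every singleton part and, from the block, exactly the first of its elements to arrive: after
any prefix `l` of the arrivals its output is `greedyState m l`. Hence
`ALG σ = (topk n m)ᶜ ∪ {first block element under σ}` and
`OPT = ALG 1 = (topk n m)ᶜ ∪ {r^1}`.
Composing the order with a transposition of two block elements swaps which of them arrives
first, so the first block element is uniform over the block: it is `r^1` with probability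
`1/m`. Thus `E|ALG ∩ R^1| = 1/m` and `E|ALG ∩ OPT| = (n - m) + 1/m`, and with `n = 2m - 1`
both claims are arithmetic.
-/

section

variable {m n : ℕ}

lemma topk_mono {k l : ℕ} (hkl : k ≤ l) : topk n k ⊆ topk n l := by
  intro x
  simp only [topk, mem_filter, mem_univ, true_and]
  omega

lemma topk_one (hn : 0 < n) : topk n 1 = {⟨0, hn⟩} := by
  ext x
  simp [topk, Fin.ext_iff]

lemma card_topk (hmn : m ≤ n) : #(topk n m) = m := by
  rw [topk, Fin.card_filter_val_lt, min_eq_right hmn]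

lemma card_compl_topk : #(topk n m)ᶜ = n - m := by
  rw [card_compl, Fintype.card_fin, topk, Fin.card_filter_val_lt]
  omega

def inBlock (m : ℕ) {n : ℕ} (x : Fin n) : Bool := (x : ℕ) < m

lemma nIndep_iff {S : Finset (Fin n)} :
    nIndep m S ↔ ∀ x ∈ S, ∀ y ∈ S, (x : ℕ) < m → (y : ℕ) < m → x = y := by
  refine ⟨fun h x hx y hy hxm hym => h x hx y hy (by simp [npart, hxm, hym]),
    fun h x hx y hy hxy => ?_⟩
  unfold npart at hxy
  split_ifs at hxy with hxm hym hym
  · exact h x hx y hy hxm hym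
  · omega
  · omega
  · exact Fin.ext hxy

def greedyStep (m : ℕ) {n : ℕ} (S : Finset (Fin n)) (r : Fin n) : Finset (Fin n) :=
  if nIndep m (insert r S) then insert r S else S

lemma greedyStep_of_mem {S : Finset (Fin n)} {r : Fin n} (h : r ∈ S) : greedyStep m S r = S := by
  simp [greedyStep, insert_eq_of_mem h]

def greedyState (m : ℕ) {n : ℕ} (l : List (Fin n)) : Finset (Fin n) :=
  {x ∈ l.toFinset | m ≤ (x : ℕ)} ∪ (l.find? (inBlock m)).toFinset

lemma find?_eq_of_mem_greedyState {l : List (Fin n)} {x : Fin n} (hx : x ∈ greedyState m l)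
    (hxm : (x : ℕ) < m) : l.find? (inBlock m) = some x := by
  simp only [greedyState, mem_union, mem_filter, List.mem_toFinset, Option.mem_toFinset,
    Option.mem_def] at hx
  rcases hx with ⟨-, hxm'⟩ | h
  · omega
  · exact h

lemma nIndep_insert_greedyState {l : List (Fin n)} {r : Fin n}
    (h : (r : ℕ) < m → l.find? (inBlock m) = none) :
    nIndep m (insert r (greedyState m l)) := by
  have key : ∀ x ∈ insert r (greedyState m l), (x : ℕ) < m →
      x = r ∨ l.find? (inBlock m) = some x := by
    intro x hx hxm
    rcases mem_insert.1 hx with rfl | hx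
    · exact .inl rfl
    · exact .inr (find?_eq_of_mem_greedyState hx hxm)
  refine nIndep_iff.2 fun x hx y hy hxm hym => ?_
  rcases key x hx hxm with rfl | hx' <;> rcases key y hy hym with rfl | hy'
  · rfl
  · simp [h hxm] at hy'
  · simp [h hym] at hx'
  · exact Option.some_injective _ (hx'.symm.trans hy')

lemma greedyStep_greedyState (l : List (Fin n)) (r : Fin n) :
    greedyStep m (greedyState m l) r = greedyState m (l ++ [r]) := by
  by_cases hfree : (r : ℕ) < m → l.find? (inBlock m) = none
  · have hS : greedyState m (l ++ [r]) = insert r (greedyState m l) := by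
      ext x
      by_cases hr : (r : ℕ) < m
      · simp [greedyState, List.find?_append, hfree hr, inBlock, hr]
        grind
      · simp [greedyState, List.find?_append, inBlock, hr]
        grind
    rw [greedyStep, if_pos (nIndep_insert_greedyState hfree), hS]
  · obtain ⟨hr, hfind⟩ := Classical.not_imp.1 hfree
    obtain ⟨y, hy⟩ := Option.ne_none_iff_exists'.1 hfind
    have hyS : y ∈ greedyState m l := by simp [greedyState, hy]
    have hS : greedyState m (l ++ [r]) = greedyState m l := by
      ext x
      simp [greedyState, List.find?_append, hy]
      grind
    rw [hS]
    by_cases hyr : y = r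
    · exact greedyStep_of_mem (hyr ▸ hyS)
    · have hym : (y : ℕ) < m := by simpa [inBlock] using List.find?_some hy
      have hdep : ¬ nIndep m (insert r (greedyState m l)) := fun h =>
        hyr (nIndep_iff.1 h y (mem_insert_of_mem hyS) r (mem_insert_self r _) hym hr)
      rw [greedyStep, if_neg hdep]

lemma foldl_greedyStep_greedyState (l l' : List (Fin n)) :
    l'.foldl (greedyStep m) (greedyState m l) = greedyState m (l ++ l') := by
  induction l' generalizing l with
  | nil => simp
  | cons r l' ih => rw [List.foldl_cons, greedyStep_greedyState, ih]; simp

def firstInBlock (m : ℕ) {n : ℕ} (σ : Equiv.Perm (Fin n)) : Option (Fin n) :=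
  (List.ofFn σ).find? (inBlock m)

lemma greedyALG_eq (σ : Equiv.Perm (Fin n)) :
    greedyALG m σ = (topk n m)ᶜ ∪ (firstInBlock m σ).toFinset := by
  have hnil : greedyState m ([] : List (Fin n)) = ∅ := by simp [greedyState]
  change (List.ofFn σ).foldl (greedyStep m) ∅ = _
  rw [← hnil, foldl_greedyStep_greedyState, List.nil_append]
  ext x
  simp [greedyState, firstInBlock, topk, List.mem_ofFn, σ.surjective x]

lemma firstInBlock_one (hm : 0 < m) (hn : 0 < n) :
    firstInBlock m (1 : Equiv.Perm (Fin n)) = some ⟨0, hn⟩ := by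
  obtain ⟨k, rfl⟩ := Nat.exists_eq_succ_of_ne_zero hn.ne'
  simp [firstInBlock, List.ofFn_succ, inBlock, hm]

lemma exists_firstInBlock_eq_some (hm : 0 < m) (hn : 0 < n) (σ : Equiv.Perm (Fin n)) :
    ∃ x ∈ topk n m, firstInBlock m σ = some x := by
  have h0 : inBlock m (⟨0, hn⟩ : Fin n) := by simp [inBlock, hm]
  obtain ⟨x, hx⟩ := Option.isSome_iff_exists.1 <| List.find?_isSome.2
    ⟨_, List.mem_ofFn.2 (σ.surjective _), h0⟩
  exact ⟨x, by simpa [topk, inBlock] using List.find?_some hx, hx⟩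

lemma firstInBlock_mul {τ : Equiv.Perm (Fin n)} (hτ : ∀ x, inBlock m (τ x) = inBlock m x)
    (σ : Equiv.Perm (Fin n)) : firstInBlock m (τ * σ) = (firstInBlock m σ).map τ := by
  have hcomp : inBlock m ∘ τ = inBlock m := funext hτ
  have hlist : List.ofFn ⇑(τ * σ) = (List.ofFn σ).map τ := by
    rw [List.map_ofFn]; rfl
  rw [firstInBlock, firstInBlock, hlist, List.find?_map, hcomp]

lemma card_filter_firstInBlock_eq_some_eq {i j : Fin n} (hi : (i : ℕ) < m) (hj : (j : ℕ) < m) :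
    #{σ : Equiv.Perm (Fin n) | firstInBlock m σ = some i} =
      #{σ : Equiv.Perm (Fin n) | firstInBlock m σ = some j} := by
  set τ := Equiv.swap i j
  have hτ : ∀ x, inBlock m (τ x) = inBlock m x := by
    intro x
    rcases eq_or_ne x i with rfl | hxi
    · simp [τ, inBlock, hi, hj]
    rcases eq_or_ne x j with rfl | hxj
    · simp [τ, inBlock, hi, hj]
    rw [Equiv.swap_apply_of_ne_of_ne hxi hxj]
  have hττ : ∀ σ, τ * (τ * σ) = σ := fun σ => by
    rw [← mul_assoc, Equiv.swap_mul_self, one_mul]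
  refine card_nbij' (τ * ·) (τ * ·) ?_ ?_ (fun σ _ => hττ σ) (fun σ _ => hττ σ) <;>
    intro σ hσ <;>
    simp_all [firstInBlock_mul hτ, τ]

lemma mul_card_filter_firstInBlock_eq_some (hm : 0 < m) (hmn : m ≤ n) {i : Fin n}
    (hi : (i : ℕ) < m) :
    m * #{σ : Equiv.Perm (Fin n) | firstInBlock m σ = some i} =
      Fintype.card (Equiv.Perm (Fin n)) := by
  have hfirst : ∀ σ ∈ (univ : Finset (Equiv.Perm (Fin n))),
      firstInBlock m σ ∈ (topk n m).map Function.Embedding.some := by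
    intro σ _
    obtain ⟨x, hx, hσ⟩ := exists_firstInBlock_eq_some hm (hm.trans_le hmn) σ
    exact mem_map.2 ⟨x, hx, hσ.symm⟩
  rw [← card_univ, card_eq_sum_card_fiberwise hfirst, sum_map]
  calc m * #{σ | firstInBlock m σ = some i}
      = ∑ j ∈ topk n m, #{σ : Equiv.Perm (Fin n) | firstInBlock m σ = some i} := by
        rw [sum_const, card_topk hmn, smul_eq_mul]
    _ = _ := sum_congr rfl fun j hj =>
        card_filter_firstInBlock_eq_some_eq hi (by simpa [topk] using hj)

lemma greedyALG_one (hm : 0 < m) (hn : 0 < n) :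
    greedyALG m (1 : Equiv.Perm (Fin n)) = (topk n m)ᶜ ∪ topk n 1 := by
  rw [greedyALG_eq, firstInBlock_one hm hn, topk_one hn, Option.toFinset_some]

lemma card_greedyALG_inter_topk_one (hm : 0 < m) (hn : 0 < n) (σ : Equiv.Perm (Fin n)) :
    #(greedyALG m σ ∩ topk n 1) = if firstInBlock m σ = some ⟨0, hn⟩ then 1 else 0 := by
  have hdisj : (topk n m)ᶜ ∩ topk n 1 = ∅ :=
    (disjoint_compl_left.mono_right (topk_mono hm)).eq_bot
  rw [greedyALG_eq, union_inter_distrib_right, hdisj, empty_union, topk_one hn]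
  cases firstInBlock m σ with
  | none => simp
  | some x => by_cases hx : x = ⟨0, hn⟩ <;> simp [hx]

lemma card_greedyALG_inter_greedyALG_one (hm : 0 < m) (hn : 0 < n) (σ : Equiv.Perm (Fin n)) :
    #(greedyALG m σ ∩ greedyALG m 1) = (n - m) + #(greedyALG m σ ∩ topk n 1) := by
  have hcompl : greedyALG m σ ∩ (topk n m)ᶜ = (topk n m)ᶜ :=
    inter_eq_right.2 (greedyALG_eq σ ▸ subset_union_left)
  rw [greedyALG_one hm hn, inter_union_distrib_left, hcompl, card_union_of_disjoint
    (disjoint_compl_left.mono_right (inter_subset_right.trans (topk_mono hm))), card_compl_topk]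

lemma card_greedyALG_one (hm : 0 < m) (hn : 0 < n) :
    #(greedyALG m (1 : Equiv.Perm (Fin n))) = n - m + 1 := by
  rw [greedyALG_one hm hn, card_union_of_disjoint (disjoint_compl_left.mono_right (topk_mono hm)),
    card_compl_topk, topk_one hn, card_singleton]

lemma card_greedyALG_one_inter_topk_one (hm : 0 < m) (hn : 0 < n) :
    #(greedyALG m (1 : Equiv.Perm (Fin n)) ∩ topk n 1) = 1 := by
  rw [greedyALG_one hm hn, inter_eq_right.2 subset_union_right, topk_one hn, card_singleton]

lemma mul_sum_card_greedyALG_inter_topk_one (hm : 0 < m) (hmn : m ≤ n) :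
    m * ∑ σ : Equiv.Perm (Fin n), #(greedyALG m σ ∩ topk n 1) =
      Fintype.card (Equiv.Perm (Fin n)) := by
  have hn : 0 < n := hm.trans_le hmn
  simp_rw [card_greedyALG_inter_topk_one hm hn, sum_boole, Nat.cast_id]
  exact mul_card_filter_firstInBlock_eq_some hm hmn hm

lemma expectation_card_greedyALG_inter_topk_one (hm : 0 < m) (hmn : m ≤ n) :
    (∑ σ : Equiv.Perm (Fin n), (#(greedyALG m σ ∩ topk n 1) : ℝ)) /
      Fintype.card (Equiv.Perm (Fin n)) = 1 / m := by
  rw [div_eq_div_iff (by positivity) (by positivity), one_mul, ← Nat.cast_sum,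
    ← mul_sum_card_greedyALG_inter_topk_one hm hmn, Nat.cast_mul, mul_comm]

lemma expectation_card_greedyALG_inter_greedyALG_one (hm : 0 < m) (hmn : m ≤ n) :
    (∑ σ : Equiv.Perm (Fin n), (#(greedyALG m σ ∩ greedyALG m 1) : ℝ)) /
      Fintype.card (Equiv.Perm (Fin n)) = (n - m : ℕ) + 1 / m := by
  have hn : 0 < n := hm.trans_le hmn
  have hcard : (Fintype.card (Equiv.Perm (Fin n)) : ℝ) ≠ 0 := by positivity
  simp_rw [card_greedyALG_inter_greedyALG_one hm hn, Nat.cast_add, sum_add_distrib, sum_const,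
    card_univ, nsmul_eq_mul]
  rw [add_div, mul_div_cancel_left₀ _ hcard,
    expectation_card_greedyALG_inter_topk_one hm hmn]

end

/-- Greedy on the partition matroid `N_m` under a uniformly random order is
`(1 + 1/m)` intersection-competitive, i.e. `|OPT| ≤ (1+1/m)·E[|ALG ∩ OPT|]`, but at
least `m` ordinal-competitive, since `|OPT ∩ R^1| = m · E[|ALG ∩ R^1|]`. Here `OPT` is
greedy's output on the identity (decreasing-value) order. -/
theorem greedy_Nm_intersection_vs_ordinal (m n : ℕ) (hm : 1 ≤ m)
    (hn : n = 2 * m - 1) :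
    (((greedyALG m (1 : Equiv.Perm (Fin n))).card : ℝ) ≤
      (1 + 1 / (m : ℝ)) *
        ((∑ σ : Equiv.Perm (Fin n),
            ((greedyALG m σ ∩ greedyALG m (1 : Equiv.Perm (Fin n))).card : ℝ)) /
          (Fintype.card (Equiv.Perm (Fin n)) : ℝ))) ∧
    (((greedyALG m (1 : Equiv.Perm (Fin n)) ∩ topk n 1).card : ℝ) =
      (m : ℝ) *
        ((∑ σ : Equiv.Perm (Fin n), ((greedyALG m σ ∩ topk n 1).card : ℝ)) /
          (Fintype.card (Equiv.Perm (Fin n)) : ℝ))) := by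
  have hmn : m ≤ n := by omega
  have hn0 : 0 < n := by omega
  rw [expectation_card_greedyALG_inter_greedyALG_one hm hmn,
    expectation_card_greedyALG_inter_topk_one hm hmn, card_greedyALG_one hm hn0,
    card_greedyALG_one_inter_topk_one hm hn0, show n - m = m - 1 by omega, Nat.sub_add_cancel hm,
    Nat.cast_pred hm, Nat.cast_one]
  have hm' : (0 : ℝ) < m := by exact_mod_cast hm
  refine ⟨?_, by field_simp⟩
  have hexpand : (1 + 1 / (m : ℝ)) * ((m - 1) + 1 / m) = m + 1 / m ^ 2 := by
    field_simp
    ring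
  rw [hexpand]
  linarith [show (0 : ℝ) < 1 / m ^ 2 by positivity]
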